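/- arXiv:2504.17041 — 4 statements merged into one kernel-verified Lean document; each statement's English description precedes it below -/
import Mathlib

section
/- For every positive integer n, the central binomial coefficient (2n)!/(n!)² divides lcm(1, 2, ..., 2n). -/
open Nat

theorem centralBinom_dvd_lcm (n : ℕ) (hn : 0 < n) :
    (2 * n)! / (n !) ^ 2 ∣ Finset.lcm (Finset.Icc 1 (2 * n)) id := by
  have heq : (2 * n)! / (n !) ^ 2 = (2 * n).choose n := by
    rw [Nat.choose_eq_factorial_div_factorial (by omega), sq]
    have : 2 * n - n = n := by omega
    rw [this]
  rw [heq]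
  set L := Finset.lcm (Finset.Icc 1 (2 * n)) id with hL
  have hLne : L ≠ 0 := by
    intro h
    have := Finset.lcm_eq_zero_iff.mp h
    simp only [Set.mem_image, Finset.mem_coe, Finset.mem_Icc, id] at this
    obtain ⟨x, hx, hx0⟩ := this
    omega
  have hcne : (2 * n).choose n ≠ 0 := Nat.choose_pos (by omega) |>.ne'
  rw [← Nat.factorization_le_iff_dvd hcne hLne]
  intro p
  by_cases hp : p.Prime
  · have h1 : ((2 * n).choose n).factorization p ≤ Nat.log p (2 * n) :=
      Nat.factorization_choose_le_log
    have h2 : p ^ Nat.log p (2 * n) ∣ L := by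
      apply Finset.dvd_lcm
      rw [Finset.mem_Icc]
      constructor
      · exact Nat.one_le_pow _ _ hp.pos
      · exact Nat.pow_log_le_self p (by omega)
    have h3 : Nat.log p (2 * n) ≤ L.factorization p :=
      (Nat.Prime.pow_dvd_iff_le_factorization hp hLne).mp h2
    omega
  · simp [Nat.factorization_eq_zero_of_not_prime _ hp]
end

section
/- For every positive integer n, 2^n ≤ lcm(1, 2, ..., 2n). -/
lemma two_pow_le_centralBinom (n : ℕ) : 2 ^ n ≤ Nat.centralBinom n := by
  induction n with
  | zero => simp [Nat.centralBinom]
  | succ n ih =>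
    have key := Nat.succ_mul_centralBinom_succ n
    have h1 : (n + 1) * (2 * 2 ^ n) ≤ (n + 1) * Nat.centralBinom (n + 1) := by
      rw [key]
      calc (n + 1) * (2 * 2 ^ n) = 2 * (n + 1) * 2 ^ n := by ring
        _ ≤ 2 * (2 * n + 1) * Nat.centralBinom n := by
            exact Nat.mul_le_mul (Nat.mul_le_mul_left 2 (by omega)) ih
    have := Nat.le_of_mul_le_mul_left h1 (Nat.succ_pos n)
    calc 2 ^ (n + 1) = 2 * 2 ^ n := by ring
      _ ≤ _ := this

theorem two_pow_le_lcm (n : ℕ) (hn : 0 < n) :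
    2 ^ n ≤ Finset.lcm (Finset.Icc 1 (2 * n)) id := by
  set L := Finset.lcm (Finset.Icc 1 (2 * n)) id with hL
  have hLpos : 0 < L := by
    rcases Nat.eq_zero_or_pos L with h | h
    · exfalso
      rw [hL] at h
      rw [Finset.lcm_eq_zero_iff] at h
      obtain ⟨x, hx, hx0⟩ := h
      simp only [Finset.mem_coe, Finset.mem_Icc] at hx
      simp only [id] at hx0
      omega
    · exact h
  have hdvd : Nat.centralBinom n ∣ L := by
    have hC : Nat.centralBinom n ≠ 0 := (Nat.centralBinom_pos n).ne'
    rw [← Nat.factorization_le_iff_dvd hC hLpos.ne']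
    intro p
    by_cases hp : p.Prime
    · have hv := Nat.pow_factorization_choose_le (p := p) (n := 2 * n)
        (k := n) (by omega)
      set v := (Nat.centralBinom n).factorization p with hv'
      rcases Nat.eq_zero_or_pos v with h0 | hvpos
      · simp [h0]
      · have hmem : p ^ v ∈ Finset.Icc 1 (2 * n) := by
          rw [Finset.mem_Icc]
          refine ⟨Nat.one_le_iff_ne_zero.mpr (pow_ne_zero _ hp.ne_zero), ?_⟩
          exact hv
        have : p ^ v ∣ L := Finset.dvd_lcm hmem
        exact (Nat.Prime.pow_dvd_iff_le_factorization hp hLpos.ne').mp this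
    · simp [Nat.factorization_eq_zero_of_not_prime _ hp]
  calc 2 ^ n ≤ Nat.centralBinom n := two_pow_le_centralBinom n
    _ ≤ L := Nat.le_of_dvd hLpos hdvd
end

section
/- For every integer n ≥ 2, there exists an integer r with 1 < r ≤ max(3, ⌈(log₂ n)⁵⌉) such that the multiplicative order of n modulo r exceeds ⌊log₂ n⌋². -/
open Finset

/-!
Let `k = ⌊log₂ n⌋`, `B` the bound and `P = ∏_{i ≤ k²} (n^i - 1)`. If every `r ≤ B` coprime to `n`
had order at most `k²`, every such `r` would divide `P`; prime powers `≤ B` dividing a power of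
`n` divide `n^⌊log₂ B⌋`, so `lcm(1, …, B)` would divide `n^⌊log₂ B⌋ P`. But
`lcm(1, …, B) ≥ 2^B / (B + 1)`, which beats `n^⌊log₂ B⌋ P ≤ 2^((k+1)(⌊log₂ B⌋ + k²(k²+1)/2))`
as soon as `k ≥ 3`, since `B ≥ k⁵`. For `n < 8` explicit moduli do the job.
-/

noncomputable def aksBound (n : ℕ) : ℕ := max 3 ⌈Real.logb 2 n ^ 5⌉₊

theorem Nat.lt_orderOf_of_not_dvd_prod {n r K : ℕ} [NeZero r] (hn : n.Coprime r)
    (hr : ¬ r ∣ ∏ i ∈ Icc 1 K, (n ^ i - 1)) : K < orderOf (n : ZMod r) := by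
  by_contra! hK
  have hpos : 0 < orderOf (n : ZMod r) := by
    rw [← ZMod.coe_unitOfCoprime n hn, orderOf_units]
    exact orderOf_pos _
  have hdvd : r ∣ n ^ orderOf (n : ZMod r) - 1 := by
    rcases Nat.eq_zero_or_pos (n ^ orderOf (n : ZMod r)) with h | h
    · simp [h]
    · rw [← ZMod.natCast_eq_zero_iff, Nat.cast_pred h, Nat.cast_pow, pow_orderOf_eq_one, sub_self]
  exact hr (hdvd.trans (dvd_prod_of_mem _ (mem_Icc.mpr ⟨hpos, hK⟩)))

theorem Nat.exists_coprime_not_dvd_of_lt_lcmUpto {n B M : ℕ} (hN : n ^ Nat.log 2 B * M ≠ 0)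
    (hlt : n ^ Nat.log 2 B * M < lcmUpto B) : ∃ r, 1 < r ∧ r ≤ B ∧ n.Coprime r ∧ ¬ r ∣ M := by
  by_contra! h
  refine hlt.not_ge (Nat.le_of_dvd (Nat.pos_of_ne_zero hN) ?_)
  rw [← Nat.factorization_prime_le_iff_dvd (lcmUpto_ne_zero B) hN]
  intro p hp
  rw [factorization_lcmUpto B hp, ← hp.pow_dvd_iff_le_factorization hN]
  by_cases hpn : p ∣ n
  · calc p ^ p.log B ∣ p ^ Nat.log 2 B := pow_dvd_pow p (Nat.log_anti_left one_lt_two hp.two_le)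
      _ ∣ n ^ Nat.log 2 B := pow_dvd_pow_of_dvd hpn _
      _ ∣ n ^ Nat.log 2 B * M := dvd_mul_right _ _
  · rcases Nat.eq_zero_or_pos (p.log B) with h0 | hpos
    · simp [h0]
    have hB : B ≠ 0 := by rintro rfl; simp at hpos
    exact (h _ (Nat.one_lt_pow hpos.ne' hp.one_lt) (Nat.pow_log_le_self p hB)
      (Nat.Coprime.pow_right _ ((Nat.coprime_comm.mp (hp.coprime_iff_not_dvd.mpr hpn))))).trans
      (dvd_mul_left _ _)

theorem Nat.prod_pow_sub_one_le_pow_sum (n K : ℕ) :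
    ∏ i ∈ Icc 1 K, (n ^ i - 1) ≤ n ^ ∑ i ∈ Icc 1 K, i := by
  rw [← prod_pow_eq_pow_sum]
  exact prod_le_prod' fun i _ => Nat.sub_le _ _

theorem Nat.two_mul_sum_Icc_id (K : ℕ) : 2 * ∑ i ∈ Icc 1 K, i = K * (K + 1) := by
  induction K with
  | zero => simp
  | succ K ih => rw [sum_Icc_succ_top (by omega), mul_add, ih]; ring

theorem Nat.succ_le_two_pow_pred {k : ℕ} (hk : 3 ≤ k) : k + 1 ≤ 2 ^ (k - 1) := by
  obtain ⟨m, rfl⟩ : ∃ m, k = m + 3 := ⟨k - 3, by omega⟩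
  have := Nat.lt_two_pow_self (n := m)
  rw [show m + 3 - 1 = m + 2 by omega, pow_add]
  omega

theorem div_le_logb_two_of_two_pow_le {a b n : ℕ} (hb : 0 < b) (h : 2 ^ a ≤ n ^ b) :
    (a / b : ℝ) ≤ Real.logb 2 n := by
  have hn : 0 < n := Nat.pos_of_ne_zero (by rintro rfl; simp [hb.ne'] at h)
  rw [div_le_iff₀ (by exact_mod_cast hb), mul_comm, ← Real.logb_pow]
  calc (a : ℝ) = Real.logb 2 (2 ^ a) := by
        rw [Real.logb_pow, Real.logb_self_eq_one one_lt_two, mul_one]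
    _ ≤ Real.logb 2 (n ^ b) :=
      Real.logb_le_logb_of_le (by norm_num) (by positivity) (by exact_mod_cast h)

theorem pow_five_le_aksBound {n : ℕ} {x : ℝ} (hx : 0 ≤ x) (h : x ≤ Real.logb 2 n) :
    x ^ 5 ≤ aksBound n := by
  calc x ^ 5 ≤ Real.logb 2 n ^ 5 := pow_le_pow_left₀ hx h 5
    _ ≤ ⌈Real.logb 2 n ^ 5⌉₊ := Nat.le_ceil _
    _ ≤ aksBound n := by exact_mod_cast le_max_right _ _

theorem aksBound_le {n : ℕ} (hn : 2 ≤ n) : aksBound n ≤ (Nat.log 2 n + 1) ^ 5 := by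
  have hlt : Real.logb 2 n < Nat.log 2 n + 1 := by
    rw [Real.logb_lt_iff_lt_rpow one_lt_two (by positivity)]
    exact_mod_cast Nat.lt_pow_succ_log_self one_lt_two n
  refine max_le ?_ (Nat.ceil_le.mpr ?_)
  · have : 1 ≤ Nat.log 2 n := Nat.le_log_of_pow_le one_lt_two (by simpa using hn)
    calc 3 ≤ 2 ^ 5 := by norm_num
      _ ≤ (Nat.log 2 n + 1) ^ 5 := Nat.pow_le_pow_left (by omega) 5
  · push_cast
    exact pow_le_pow_left₀ (Real.logb_nonneg one_lt_two (by exact_mod_cast (by omega : 1 ≤ n)))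
      hlt.le 5

theorem Nat.add_one_add_succ_mul_lt {k E S B : ℕ} (hk : 3 ≤ k) (hE : E + 5 ≤ 5 * k)
    (hS : 2 * S = k ^ 2 * (k ^ 2 + 1)) (hB : k ^ 5 ≤ B) : E + 1 + (k + 1) * (E + S) < B := by
  have hEk := Nat.mul_le_mul_left (k + 2) hE
  have hSk := congrArg ((k + 1) * ·) hS
  have hpoly : k ^ 4 + k ^ 3 + 11 * k ^ 2 + 10 * k + 2 < k ^ 5 + 20 := by
    obtain ⟨j, rfl⟩ : ∃ j, k = j + 3 := ⟨k - 3, by omega⟩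
    ring_nf
    nlinarith [sq_nonneg j, pow_nonneg (Nat.zero_le j) 3]
  nlinarith

theorem pow_mul_prod_pow_sub_one_lt_lcmUpto {n : ℕ} (hn : 8 ≤ n) :
    n ^ Nat.log 2 (aksBound n) * ∏ i ∈ Icc 1 (Nat.log 2 n ^ 2), (n ^ i - 1) <
      Nat.lcmUpto (aksBound n) := by
  have hk : 3 ≤ Nat.log 2 n := Nat.le_log_of_pow_le one_lt_two hn
  set k := Nat.log 2 n
  set B := aksBound n
  set E := Nat.log 2 B
  set S := ∑ i ∈ Icc 1 (k ^ 2), i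
  have hkB : k ^ 5 ≤ B := by
    exact_mod_cast pow_five_le_aksBound (Nat.cast_nonneg k) (Real.natLog_le_logb n 2)
  have hE : E + 5 ≤ 5 * k := by
    have : B ≤ 2 ^ (5 * (k - 1)) :=
      calc B ≤ (k + 1) ^ 5 := aksBound_le (by omega)
        _ ≤ (2 ^ (k - 1)) ^ 5 := Nat.pow_le_pow_left (Nat.succ_le_two_pow_pred hk) 5
        _ = 2 ^ (5 * (k - 1)) := by rw [← pow_mul, mul_comm]
    have := (Nat.log_mono_right this).trans_eq (Nat.log_pow one_lt_two _)
    omega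
  refine Nat.lt_of_mul_lt_mul_left (a := B + 1) ?_
  calc (B + 1) * (n ^ E * ∏ i ∈ Icc 1 (k ^ 2), (n ^ i - 1)) ≤ 2 ^ (E + 1) * (n ^ E * n ^ S) :=
        Nat.mul_le_mul (Nat.lt_pow_succ_log_self one_lt_two B)
          (Nat.mul_le_mul_left _ (Nat.prod_pow_sub_one_le_pow_sum n _))
    _ ≤ 2 ^ (E + 1) * (2 ^ (k + 1)) ^ (E + S) := by
        rw [← pow_add]
        gcongr
        exact (Nat.lt_pow_succ_log_self one_lt_two n).le
    _ = 2 ^ (E + 1 + (k + 1) * (E + S)) := by rw [← pow_mul, ← pow_add]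
    _ < 2 ^ B := Nat.pow_lt_pow_right one_lt_two
        (Nat.add_one_add_succ_mul_lt hk hE (Nat.two_mul_sum_Icc_id _) hkB)
    _ ≤ (B + 1) * Nat.lcmUpto B := Chebyshev.two_pow_le_mul_lcmUpto B

theorem exists_order_gt_of_eight_le {n : ℕ} (hn : 8 ≤ n) :
    ∃ r : ℕ, 1 < r ∧ r ≤ aksBound n ∧ n.Coprime r ∧ (Nat.log 2 n) ^ 2 < orderOf (n : ZMod r) := by
  have hP : ∏ i ∈ Icc 1 (Nat.log 2 n ^ 2), (n ^ i - 1) ≠ 0 := prod_ne_zero_iff.mpr fun i hi =>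
    Nat.sub_ne_zero_of_lt (Nat.one_lt_pow (Nat.one_le_iff_ne_zero.mp (mem_Icc.mp hi).1) (by omega))
  obtain ⟨r, hr1, hrB, hcop, hrP⟩ := Nat.exists_coprime_not_dvd_of_lt_lcmUpto
    (mul_ne_zero (by positivity) hP) (pow_mul_prod_pow_sub_one_lt_lcmUpto hn)
  have : NeZero r := ⟨by omega⟩
  exact ⟨r, hr1, hrB, hcop, Nat.lt_orderOf_of_not_dvd_prod hcop hrP⟩

theorem exists_order_gt_of_lt_eight {n : ℕ} (hn : 2 ≤ n) (h8 : n < 8) :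
    ∃ r : ℕ, 1 < r ∧ r ≤ aksBound n ∧ n.Coprime r ∧ (Nat.log 2 n) ^ 2 < orderOf (n : ZMod r) := by
  have hB : ∀ {m : ℕ}, 4 ≤ m → 11 ≤ aksBound m := fun hm => by
    have := pow_five_le_aksBound (by norm_num)
      (div_le_logb_two_of_two_pow_le (a := 2) (b := 1) one_pos (by simpa using hm))
    norm_num at this
    omega
  interval_cases n
  · exact ⟨3, by norm_num, le_max_left _ _, by decide,
      Nat.lt_orderOf_of_not_dvd_prod (by decide) (by decide)⟩
  · have := pow_five_le_aksBound (by norm_num)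
      (div_le_logb_two_of_two_pow_le (a := 3) (b := 2) (n := 3) two_pos (by norm_num))
    norm_num at this
    exact ⟨5, by norm_num, by exact_mod_cast (by norm_num : (5 : ℝ) ≤ 243 / 32).trans this,
      by decide, Nat.lt_orderOf_of_not_dvd_prod (by decide) (by decide)⟩
  all_goals exact ⟨11, by norm_num, hB (by norm_num), by decide,
    Nat.lt_orderOf_of_not_dvd_prod (by decide) (by decide)⟩

theorem exists_order_gt (n : ℕ) (hn : 2 ≤ n) :
    ∃ r : ℕ, 1 < r ∧ r ≤ max 3 ⌈(Real.logb 2 n) ^ 5⌉₊ ∧ Nat.Coprime n r ∧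
      (Nat.log 2 n) ^ 2 < orderOf (n : ZMod r) := by
  rcases lt_or_ge n 8 with h8 | h8
  · exact exists_order_gt_of_lt_eight hn h8
  · exact exists_order_gt_of_eight_le h8
end

section
/- Let p be a prime and r an integer with 1 ≤ r < p such that r does not divide p − 1. Then there exists an irreducible polynomial h ∈ (ℤ/pℤ)[X] of degree at least 2 such that h divides X^r − 1 but h does not divide X^{r′} − 1 for any r′ with 0 < r′ < r. -/
/-!
Every root of the cyclotomic polynomial `Φ_r`, in any domain where `r ≠ 0`, is a primitive
`r`-th root of unity; since `r < p`, this applies over `ZMod p` and its extensions. Take an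
irreducible factor `h` of `Φ_r`. A root of `h` in `ZMod p` would be a primitive `r`-th root of
unity in a group of order `p - 1`, forcing `r ∣ p - 1`; so `deg h ≥ 2`. If `h ∣ X ^ r' - 1`,
then the root `ζ` of `h` in `AdjoinRoot h` is a primitive `r`-th root of unity with
`ζ ^ r' = 1`, so `r ∣ r'`.
-/

open Polynomial

theorem IsPrimitiveRoot.of_aeval_eq_zero_of_dvd_cyclotomic {K L : Type*} [CommRing K]
    [CommRing L] [IsDomain L] [Algebra K L] {n : ℕ} [NeZero (n : L)] {h : K[X]}
    (hdvd : h ∣ cyclotomic n K) {x : L} (hx : aeval x h = 0) : IsPrimitiveRoot x n := by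
  obtain ⟨g, hg⟩ := hdvd
  rw [← isRoot_cyclotomic_iff, ← map_cyclotomic n (algebraMap K L), IsRoot, eval_map,
    ← aeval_def, hg, map_mul, hx, zero_mul]

theorem IsPrimitiveRoot.dvd_card_sub_one {K : Type*} [Field K] [Fintype K] {ζ : K} {n : ℕ}
    (hζ : IsPrimitiveRoot ζ n) (hn : n ≠ 0) : n ∣ Fintype.card K - 1 :=
  hζ.pow_eq_one_iff_dvd _ |>.mp <| FiniteField.pow_card_sub_one_eq_one ζ (hζ.ne_zero hn)

theorem dvd_card_sub_one_of_dvd_cyclotomic_of_natDegree_eq_one {K : Type*} [Field K] [Fintype K]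
    {n : ℕ} [NeZero (n : K)] {h : K[X]} (hdvd : h ∣ cyclotomic n K) (hdeg : h.natDegree = 1) :
    n ∣ Fintype.card K - 1 := by
  obtain ⟨a, ha⟩ := exists_root_of_degree_eq_one <|
    (degree_eq_iff_natDegree_eq_of_pos one_pos).mpr hdeg
  have := NeZero.of_neZero_natCast K (n := n)
  exact (IsPrimitiveRoot.of_aeval_eq_zero_of_dvd_cyclotomic (L := K) hdvd
    (by simpa using ha)).dvd_card_sub_one (NeZero.ne n)

theorem dvd_of_dvd_cyclotomic_of_dvd_X_pow_sub_one {K : Type*} [Field K] {n m : ℕ}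
    [NeZero (n : K)] {h : K[X]} [Fact (Irreducible h)] (hn : h ∣ cyclotomic n K)
    (hm : h ∣ X ^ m - 1) : n ∣ m := by
  have : NeZero (n : AdjoinRoot h) := NeZero.nat_of_injective (algebraMap K _).injective
  have hζ := IsPrimitiveRoot.of_aeval_eq_zero_of_dvd_cyclotomic hn <|
    (AdjoinRoot.aeval_eq h).trans AdjoinRoot.mk_self
  have hζm : AdjoinRoot.root h ^ m = 1 := by
    have := (AdjoinRoot.aeval_eq (X ^ m - 1)).trans (AdjoinRoot.mk_eq_zero.mpr hm)
    rwa [map_sub, map_pow, aeval_X, map_one, sub_eq_zero] at this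
  exact hζ.pow_eq_one_iff_dvd m |>.mp hζm

theorem exists_irreducible_factor (p r : ℕ) (hp : p.Prime) (hr : 1 ≤ r) (hrp : r < p)
    (hnd : ¬ r ∣ p - 1) :
    ∃ h : (ZMod p)[X], Irreducible h ∧ 2 ≤ h.natDegree ∧ h ∣ X ^ r - 1 ∧
      ∀ r' : ℕ, 0 < r' → r' < r → ¬ h ∣ X ^ r' - 1 := by
  have : Fact p.Prime := ⟨hp⟩
  have : NeZero (r : ZMod p) :=
    ⟨(ZMod.natCast_eq_zero_iff r p).not.mpr (Nat.not_dvd_of_pos_of_lt hr hrp)⟩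
  obtain ⟨h, hirr, hdvd⟩ := WfDvdMonoid.exists_irreducible_factor
    (not_isUnit_of_natDegree_pos _ (by rw [natDegree_cyclotomic]; exact Nat.totient_pos.2 hr))
    (cyclotomic_ne_zero r (ZMod p))
  have : Fact (Irreducible h) := ⟨hirr⟩
  refine ⟨h, hirr, ?_, hdvd.trans (cyclotomic.dvd_X_pow_sub_one r _), ?_⟩
  · by_contra! hlt
    apply hnd
    simpa using dvd_card_sub_one_of_dvd_cyclotomic_of_natDegree_eq_one hdvd
      (by have := hirr.natDegree_pos; omega)
  · intro r' hr' hr'r hdvd'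
    exact Nat.not_dvd_of_pos_of_lt hr' hr'r (dvd_of_dvd_cyclotomic_of_dvd_X_pow_sub_one hdvd hdvd')
end
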